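/- Let X be a metric space, let ε be a real number with 0 < ε < 1/4, and let v, u, p, q, w, f be points of X. Suppose that dist(v,w) = dist(v,u) + dist(u,w), that dist(u,p) ≤ dist(u,v), that dist(u,p) = dist(u,q) + dist(q,p), that dist(u,p) ≤ (1+ε)·dist(q,p) + 1, and that dist(q,f) ≤ (1+ε)·dist(q,w) + 1. Then dist(v,f) ≤ (1+4ε)·dist(v,w) + 4. -/

import Mathlib

/-!
Since `q` lies on a shortest `u`–`p` path and `dist u p` is within a factor `1 + ε` (plus `1`)
of `dist q p`, the point `q` is close to `u`: `dist u q ≤ ε * dist u v + 1`. Routing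
`v → u → q → f` and bounding `dist q w` through `u` then costs only `O(ε) * dist v u`, while
`dist v w = dist v u + dist u w` absorbs the remaining terms.
-/

section

variable {X : Type*} [PseudoMetricSpace X]

lemma dist_le_mul_add_of_dist_eq_add {ε c : ℝ} (hε : 0 ≤ ε) {u q p : X}
    (hq : dist u p = dist u q + dist q p) (h : dist u p ≤ (1 + ε) * dist q p + c) :
    dist u q ≤ ε * dist u p + c := by
  have hqp : dist q p ≤ dist u p := by linarith [dist_nonneg (x := u) (y := q)]
  linarith [mul_le_mul_of_nonneg_left hqp hε]

lemma dist_le_of_dist_le_mul_add {ε c : ℝ} (hε : 0 ≤ 1 + ε) {v u q w f : X}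
    (h : dist q f ≤ (1 + ε) * dist q w + c) :
    dist v f ≤ dist v u + (2 + ε) * dist u q + (1 + ε) * dist u w + c := by
  have hqw : (1 + ε) * dist q w ≤ (1 + ε) * (dist u q + dist u w) := by
    gcongr
    rw [dist_comm u q]
    exact dist_triangle q u w
  calc dist v f ≤ dist v u + dist u q + dist q f := dist_triangle4 v u q f
    _ ≤ dist v u + (2 + ε) * dist u q + (1 + ε) * dist u w + c := by linarith

end

theorem stmt_10 {X : Type*} [MetricSpace X] (ε : ℝ) (hε0 : 0 < ε) (hε1 : ε < 1/4)
    (v u p q w f : X)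
    (h1 : dist v w = dist v u + dist u w)
    (h2 : dist u p ≤ dist u v)
    (h3 : dist u p = dist u q + dist q p)
    (h4 : dist u p ≤ (1 + ε) * dist q p + 1)
    (h5 : dist q f ≤ (1 + ε) * dist q w + 1) :
    dist v f ≤ (1 + 4 * ε) * dist v w + 4 := by
  have huq : dist u q ≤ ε * dist v u + 1 := by
    have hup := dist_le_mul_add_of_dist_eq_add hε0.le h3 h4
    rw [dist_comm v u]
    linarith [mul_le_mul_of_nonneg_left h2 hε0.le]
  have hvf := dist_le_of_dist_le_mul_add (v := v) (u := u) (by linarith) h5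
  have hvu := dist_nonneg (x := v) (y := u)
  have huw := dist_nonneg (x := u) (y := w)
  rw [h1]
  -- `ε² ≤ 2ε` because `ε ≤ 2`
  linarith [mul_nonneg hε0.le huw, mul_le_mul_of_nonneg_left huq (by linarith : (0 : ℝ) ≤ 2 + ε),
    mul_nonneg (mul_nonneg hε0.le hvu) (by linarith : (0 : ℝ) ≤ 2 - ε)]
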